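/- arXiv:1701.08927 — 4 statements merged into one kernel-verified Lean document; each statement's English description precedes it below -/
import Mathlib

section
/- Let k ≥ 2, q ≥ 2 be integers and δ a positive integer with δ ≤ k. Consider nonnegative integers α₁ ≤ k, α₂, and weights w₁,...,w_{k-α₁} each in {1,...,k(q-1)-1}. If α₂ < min(α₁, δ), then the quantity Σᵢ (k(q-1) - wᵢ) + α₂·k(q-1) is at most (k-1)·k(q-1) - k + δ. -/
theorem stmt_4 (k q δ α₁ α₂ : ℕ) (hk : 2 ≤ k) (hq : 2 ≤ q)
    (hδpos : 0 < δ) (hδk : δ ≤ k) (hα₁ : α₁ ≤ k)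
    (w : Fin (k - α₁) → ℕ)
    (hw : ∀ i, 1 ≤ w i ∧ w i ≤ k * (q - 1) - 1)
    (herase : α₂ < min α₁ δ) :
    (∑ i, (k * (q - 1) - w i)) + α₂ * (k * (q - 1)) ≤
      (k - 1) * (k * (q - 1)) - k + δ := by
  set M := k * (q - 1) with hMdef
  have hM : 2 ≤ M := by
    have : 1 ≤ q - 1 := by omega
    calc 2 ≤ k * 1 := by omega
    _ ≤ k * (q - 1) := Nat.mul_le_mul_left k this
  have hα₁pos : 1 ≤ α₁ := by omega
  have h1 : (∑ i, (M - w i)) ≤ (k - α₁) * (M - 1) := by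
    calc (∑ i, (M - w i)) ≤ ∑ _i : Fin (k - α₁), (M - 1) :=
          Finset.sum_le_sum (fun i _ => by have := (hw i).1; omega)
    _ = (k - α₁) * (M - 1) := by simp [Finset.sum_const, mul_comm]
  have h2 : α₂ * M ≤ (α₁ - 1) * (M - 1) + (δ - 1) := by
    have hα₂ : α₂ ≤ α₁ - 1 := by omega
    have hα₂δ : α₂ ≤ δ - 1 := by omega
    calc α₂ * M = α₂ * (M - 1) + α₂ := by
          rw [← Nat.mul_succ]; congr 1; omega
    _ ≤ (α₁ - 1) * (M - 1) + (δ - 1) :=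
          Nat.add_le_add (Nat.mul_le_mul_right _ hα₂) hα₂δ
  have h3 : (k - α₁) * (M - 1) + (α₁ - 1) * (M - 1) = (k - 1) * (M - 1) := by
    rw [← Nat.add_mul]; congr 1; omega
  have h4 : (k - 1) * (M - 1) + (k - 1) = (k - 1) * M := by
    rw [← Nat.mul_succ]; congr 1; omega
  have h5 : k ≤ (k - 1) * M := by
    calc k ≤ (k - 1) * 2 := by omega
    _ ≤ (k - 1) * M := Nat.mul_le_mul_left _ hM
  omega
end

section
/- Let k ≥ 3, q ≥ 2 be integers. Consider nonnegative integers β₁ ≤ k, β₂, and weights w₁,...,w_{k-β₁} each in {1,...,k(q-1)-1}. If ⌊β₁/2⌋ > β₂, then Σᵢ (k(q-1) - wᵢ) + β₂·k(q-1) ≤ (k-2)·k(q-1) - k + 2. -/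
theorem stmt_7 (k q β₁ β₂ : ℕ) (hk : 3 ≤ k) (hq : 2 ≤ q) (hβ₁ : β₁ ≤ k)
    (w : Fin (k - β₁) → ℕ)
    (hw : ∀ i, 1 ≤ w i ∧ w i ≤ k * (q - 1) - 1)
    (herase : β₁ / 2 > β₂) :
    (∑ i, (k * (q - 1) - w i)) + β₂ * (k * (q - 1)) ≤
      (k - 2) * (k * (q - 1)) - k + 2 := by
  set M := k * (q - 1) with hM
  have hMk : k ≤ M := by
    have : 1 ≤ q - 1 := by omega
    calc k = k * 1 := by ring
    _ ≤ k * (q - 1) := Nat.mul_le_mul_left k this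
  have hb : 2 * β₂ + 2 ≤ β₁ := by omega
  have hsum : (∑ i, (M - w i)) ≤ (k - β₁) * (M - 1) := by
    calc (∑ i, (M - w i)) ≤ ∑ _i : Fin (k - β₁), (M - 1) :=
          Finset.sum_le_sum (fun i _ => by have := hw i; omega)
    _ = (k - β₁) * (M - 1) := by simp [Finset.sum_const, Finset.card_univ, mul_comm]
  have hkM : k ≤ (k - 2) * M := by
    calc k ≤ M := hMk
    _ = 1 * M := (one_mul M).symm
    _ ≤ (k - 2) * M := Nat.mul_le_mul_right M (by omega)
  have key : (k - β₁) * (M - 1) + β₂ * M ≤ (k - 2) * M - k + 2 := by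
    have h1 : 1 ≤ M := by omega
    have h2 : 2 ≤ k := by omega
    zify [hβ₁, h1, h2, hkM]
    have c1 : (β₁ : ℤ) ≥ 2 * β₂ + 2 := by exact_mod_cast hb
    have c2 : (M : ℤ) ≥ k := by exact_mod_cast hMk
    have c3 : (k : ℤ) ≥ 3 := by exact_mod_cast hk
    have c4 : (β₁ : ℤ) ≤ k := by exact_mod_cast hβ₁
    nlinarith [mul_nonneg (by linarith : (0:ℤ) ≤ (β₁ : ℤ) - 2 * β₂ - 2)
        (by linarith : (0:ℤ) ≤ (M:ℤ) - 1),
      mul_nonneg (by positivity : (0:ℤ) ≤ (β₂:ℤ)) (by linarith : (0:ℤ) ≤ (M:ℤ) - 2)]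
  calc (∑ i, (M - w i)) + β₂ * M ≤ (k - β₁) * (M - 1) + β₂ * M := by omega
  _ ≤ (k - 2) * M - k + 2 := key
end

section
/- Let k ≥ 5 be odd and q ≥ 2. Define p₁ = 2k(k²+3)/(k-3) - k/(q-1) and p₂ = k(2k⁴-k³+2k²-k-6)/((k+1)(k-1)(k-3)) - k(k²-7k+4)/((k-1)(k-3)(q-1)) (as rationals). Then p₁ - p₂ = ((k⁴+2k³+k²)(q-1) - 3k³ - 2k² + k)/((k+1)(k-1)(k-3)(q-1)) > 0, so p₁ > p₂. -/
theorem stmt_11 (k q : ℕ) (hk : 5 ≤ k) (hko : Odd k) (hq : 2 ≤ q)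
    (p₁ p₂ : ℚ)
    (hp₁ : p₁ = 2 * (k : ℚ) * ((k : ℚ)^2 + 3) / ((k : ℚ) - 3) - (k : ℚ) / ((q : ℚ) - 1))
    (hp₂ : p₂ = (k : ℚ) * (2*(k : ℚ)^4 - (k : ℚ)^3 + 2*(k : ℚ)^2 - k - 6) /
        (((k : ℚ) + 1) * ((k : ℚ) - 1) * ((k : ℚ) - 3))
      - (k : ℚ) * ((k : ℚ)^2 - 7*k + 4) / (((k : ℚ) - 1) * ((k : ℚ) - 3) * ((q : ℚ) - 1))) :
    p₁ - p₂ = (((k : ℚ)^4 + 2*(k : ℚ)^3 + (k : ℚ)^2) * ((q : ℚ) - 1) - 3*(k : ℚ)^3 - 2*(k : ℚ)^2 + k) /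
        (((k : ℚ) + 1) * ((k : ℚ) - 1) * ((k : ℚ) - 3) * ((q : ℚ) - 1)) ∧ p₁ > p₂ := by
  have hk5 : (5 : ℚ) ≤ (k : ℚ) := by exact_mod_cast hk
  have hq2 : (2 : ℚ) ≤ (q : ℚ) := by exact_mod_cast hq
  have h1 : ((k : ℚ) - 3) ≠ 0 := by linarith
  have h2 : ((k : ℚ) - 1) ≠ 0 := by linarith
  have h3 : ((k : ℚ) + 1) ≠ 0 := by linarith
  have h4 : ((q : ℚ) - 1) ≠ 0 := by linarith
  have heq : p₁ - p₂ = (((k : ℚ)^4 + 2*(k : ℚ)^3 + (k : ℚ)^2) * ((q : ℚ) - 1) - 3*(k : ℚ)^3 - 2*(k : ℚ)^2 + k) /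
        (((k : ℚ) + 1) * ((k : ℚ) - 1) * ((k : ℚ) - 3) * ((q : ℚ) - 1)) := by
    subst hp₁ hp₂
    field_simp
    ring
  refine ⟨heq, ?_⟩
  have hnum : (0 : ℚ) < ((k : ℚ)^4 + 2*(k : ℚ)^3 + (k : ℚ)^2) * ((q : ℚ) - 1) - 3*(k : ℚ)^3 - 2*(k : ℚ)^2 + k := by
    have hmul : (0:ℚ) ≤ ((k : ℚ)^4 + 2*(k : ℚ)^3 + (k : ℚ)^2) * ((q : ℚ) - 2) :=
      mul_nonneg (by nlinarith) (by linarith)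
    nlinarith [hmul, sq_nonneg ((k:ℚ) - 1), sq_nonneg ((k:ℚ)^2 - (k:ℚ))]
  have hden : (0 : ℚ) < ((k : ℚ) + 1) * ((k : ℚ) - 1) * ((k : ℚ) - 3) * ((q : ℚ) - 1) := by exact mul_pos (mul_pos (mul_pos (by linarith) (by linarith)) (by linarith)) (by linarith)
  have : 0 < p₁ - p₂ := heq ▸ div_pos hnum hden
  linarith
end

section
/- Let k ≥ 4 be even, q ≥ 2, and define δ = k/2, t_ub = n(q-1)/k, and t_lb1 = 2((n-k²-2)/(k+2) - 1/k)(q-1) + 2k/(k+2) - 1 (rationals). Then t_lb1 > t_ub if and only if n > 2(k³+3k+2)/(k-2) - k/(q-1). -/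
private lemma aux_div_pos {a b : ℚ} (hb : 0 < b) : 0 < a / b ↔ 0 < a := by
  rw [lt_div_iff₀ hb, zero_mul]

theorem stmt_12 (k q : ℕ) (hk : 4 ≤ k) (hke : Even k) (hq : 2 ≤ q) (n : ℚ)
    (δ t_ub t_lb1 : ℚ)
    (hδ : δ = (k : ℚ) / 2)
    (hub : t_ub = n * ((q : ℚ) - 1) / (k : ℚ))
    (hlb : t_lb1 = 2 * ((n - (k : ℚ)^2 - 2) / ((k : ℚ) + 2) - 1 / (k : ℚ)) * ((q : ℚ) - 1)
      + 2 * (k : ℚ) / ((k : ℚ) + 2) - 1) :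
    t_lb1 > t_ub ↔ n > 2 * ((k : ℚ)^3 + 3*k + 2) / ((k : ℚ) - 2) - (k : ℚ) / ((q : ℚ) - 1) := by
  have hK : (4:ℚ) ≤ (k:ℚ) := by exact_mod_cast hk
  have hQ : (2:ℚ) ≤ (q:ℚ) := by exact_mod_cast hq
  have h1 : (0:ℚ) < (k:ℚ) := by linarith
  have h2 : (0:ℚ) < (k:ℚ) + 2 := by linarith
  have h3 : (0:ℚ) < (k:ℚ) - 2 := by linarith
  have h4 : (0:ℚ) < (q:ℚ) - 1 := by linarith
  set P : ℚ := ((q:ℚ) - 1) * (((k:ℚ) - 2) * n - 2*(k:ℚ)^3 - 6*(k:ℚ) - 4) + (k:ℚ)^2 - 2*(k:ℚ)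
    with hP
  have e1 : t_lb1 - t_ub = P / ((k:ℚ) * ((k:ℚ) + 2)) := by
    rw [hub, hlb, hP]
    field_simp
    ring
  have e2 : n - (2 * ((k : ℚ)^3 + 3*k + 2) / ((k : ℚ) - 2) - (k : ℚ) / ((q : ℚ) - 1))
      = P / (((k:ℚ) - 2) * ((q:ℚ) - 1)) := by
    rw [hP]
    field_simp
    ring
  have key1 : t_ub < t_lb1 ↔ 0 < P := by
    rw [← sub_pos, e1, aux_div_pos (by positivity)]
  have key2 : 2 * ((k : ℚ)^3 + 3*k + 2) / ((k : ℚ) - 2) - (k : ℚ) / ((q : ℚ) - 1) < n ↔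
      0 < P := by
    rw [← sub_pos, e2, aux_div_pos (by positivity)]
  rw [gt_iff_lt, key1, gt_iff_lt, key2]
end
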